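/- arXiv:2503.14940 — 2 statements merged into one kernel-verified Lean document; each statement's English description precedes it below -/
import Mathlib

section
/- Let V : (P, ||·||_TV) → (V, ρ) be a functional from a set of probability measures to a metric space, and suppose there exists P₀ ∈ P and ε > 0 such that for every δ > 0 there exists P₁ ∈ P with ||P₀ − P₁||_TV < δ and ρ(V(P₀), V(P₁)) > ε. Then for every n ∈ N, inf over all estimators V̂_n (measurable functions of an i.i.d. sample of size n) of sup over P ∈ P of E_P[ρ(V(P), V̂_n(X))] is at least ε/4. -/
open MeasureTheory

/-- Total variation distance between two measures: `sup_A |P(A) − Q(A)|`. -/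
noncomputable def tvDist {α : Type*} [MeasurableSpace α]
    (P Q : Measure α) : ℝ :=
  ⨆ s : Set α, |(P s).toReal - (Q s).toReal|

open scoped ENNReal

lemma abs_le_tvDist {α : Type*} [MeasurableSpace α] (P Q : Measure α)
    [IsProbabilityMeasure P] [IsProbabilityMeasure Q] (s : Set α) :
    |(P s).toReal - (Q s).toReal| ≤ tvDist P Q := by
  refine le_ciSup (f := fun s : Set α => |(P s).toReal - (Q s).toReal|) ?_ s
  refine ⟨1, ?_⟩
  rintro _ ⟨t, rfl⟩
  have h1 : (P t).toReal ≤ 1 := by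
    have := measure_mono (μ := P) (Set.subset_univ t)
    rw [measure_univ] at this
    simpa using ENNReal.toReal_mono (by simp) this
  have h2 : (Q t).toReal ≤ 1 := by
    have := measure_mono (μ := Q) (Set.subset_univ t)
    rw [measure_univ] at this
    simpa using ENNReal.toReal_mono (by simp) this
  have h3 : 0 ≤ (P t).toReal := ENNReal.toReal_nonneg
  have h4 : 0 ≤ (Q t).toReal := ENNReal.toReal_nonneg
  rw [abs_sub_le_iff]
  constructor <;> linarith

lemma tvDist_comm {α : Type*} [MeasurableSpace α] (P Q : Measure α) :
    tvDist P Q = tvDist Q P := by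
  unfold tvDist
  exact iSup_congr fun s => abs_sub_comm _ _

/-- Key one-sample bound: for `0 ≤ g ≤ 1`,
`∫ g dP ≤ ∫ g dQ + tvDist P Q`. -/
lemma lintegral_le_add_tvDist {α : Type*} [MeasurableSpace α] (P Q : Measure α)
    [IsProbabilityMeasure P] [IsProbabilityMeasure Q]
    (g : α → ℝ≥0∞) (hg : ∀ x, g x ≤ 1) :
    ∫⁻ x, g x ∂P ≤ ∫⁻ x, g x ∂Q + ENNReal.ofReal (tvDist P Q) := by
  obtain ⟨S, hSm, hS, hSc⟩ := hahn_decomposition (μ := P) (ν := Q)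
  have hcompl : ∫⁻ x in Sᶜ, g x ∂P ≤ ∫⁻ x in Sᶜ, g x ∂Q := by
    refine lintegral_mono' (Measure.le_iff.2 fun t ht => ?_) le_rfl
    rw [Measure.restrict_apply ht, Measure.restrict_apply ht]
    exact hSc _ (ht.inter hSm.compl) Set.inter_subset_right
  have hle : Q.restrict S ≤ P.restrict S := by
    refine Measure.le_iff.2 fun t ht => ?_
    rw [Measure.restrict_apply ht, Measure.restrict_apply ht]
    exact hS _ (ht.inter hSm) Set.inter_subset_right
  have hdecomp : P.restrict S = (P.restrict S - Q.restrict S) + Q.restrict S :=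
    (Measure.sub_add_cancel_of_le hle).symm
  have hdiff : (P.restrict S - Q.restrict S) Set.univ ≤ ENNReal.ofReal (tvDist P Q) := by
    rw [Measure.sub_apply MeasurableSet.univ hle]
    simp only [Measure.restrict_apply_univ]
    have h1 : (P S).toReal - (Q S).toReal ≤ tvDist P Q :=
      le_trans (le_abs_self _) (abs_le_tvDist P Q S)
    have hPfin : P S ≠ ⊤ := measure_ne_top _ _
    rw [← ENNReal.ofReal_toReal (a := P S - Q S)
      (ne_top_of_le_ne_top hPfin tsub_le_self)]
    apply ENNReal.ofReal_le_ofReal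
    rw [ENNReal.toReal_sub_of_le (hS S hSm le_rfl) hPfin]
    exact h1
  have hS1 : ∫⁻ x in S, g x ∂P ≤ ∫⁻ x in S, g x ∂Q + ENNReal.ofReal (tvDist P Q) := by
    calc ∫⁻ x in S, g x ∂P = ∫⁻ x, g x ∂((P.restrict S - Q.restrict S) + Q.restrict S) := by
          rw [← hdecomp]
      _ = ∫⁻ x, g x ∂(P.restrict S - Q.restrict S) + ∫⁻ x in S, g x ∂Q :=
          lintegral_add_measure _ _ _
      _ ≤ ENNReal.ofReal (tvDist P Q) + ∫⁻ x in S, g x ∂Q := by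
          gcongr
          calc ∫⁻ x, g x ∂(P.restrict S - Q.restrict S)
              ≤ ∫⁻ _, 1 ∂(P.restrict S - Q.restrict S) := lintegral_mono hg
            _ = (P.restrict S - Q.restrict S) Set.univ := by simp
            _ ≤ _ := hdiff
      _ = ∫⁻ x in S, g x ∂Q + ENNReal.ofReal (tvDist P Q) := add_comm _ _
  calc ∫⁻ x, g x ∂P = ∫⁻ x in S, g x ∂P + ∫⁻ x in Sᶜ, g x ∂P :=
        (lintegral_add_compl _ hSm).symm
    _ ≤ (∫⁻ x in S, g x ∂Q + ENNReal.ofReal (tvDist P Q)) + ∫⁻ x in Sᶜ, g x ∂Q := by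
        gcongr
    _ = (∫⁻ x in S, g x ∂Q + ∫⁻ x in Sᶜ, g x ∂Q) + ENNReal.ofReal (tvDist P Q) := by ring
    _ = ∫⁻ x, g x ∂Q + ENNReal.ofReal (tvDist P Q) := by rw [lintegral_add_compl _ hSm]

/-- Hybrid-argument product bound: `∫ g dPⁿ ≤ ∫ g dQⁿ + n · tvDist P Q` for `0 ≤ g ≤ 1`. -/
lemma lintegral_pi_le_add_tvDist {α : Type*} [MeasurableSpace α] (P Q : Measure α)
    [IsProbabilityMeasure P] [IsProbabilityMeasure Q] :
    ∀ (n : ℕ) (g : (Fin n → α) → ℝ≥0∞), Measurable g → (∀ x, g x ≤ 1) →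
    ∫⁻ x, g x ∂(Measure.pi fun _ : Fin n => P) ≤
      ∫⁻ x, g x ∂(Measure.pi fun _ : Fin n => Q) + n * ENNReal.ofReal (tvDist P Q) := by
  intro n
  induction n with
  | zero =>
    intro g hgm hg
    rw [Measure.pi_of_empty, Measure.pi_of_empty]
    simp
  | succ n IH =>
    intro g hgm hg
    set e := MeasurableEquiv.piFinSuccAbove (fun _ : Fin (n + 1) => α) 0 with he
    have hmpP := measurePreserving_piFinSuccAbove (fun _ : Fin (n + 1) => P) 0
    have hmpQ := measurePreserving_piFinSuccAbove (fun _ : Fin (n + 1) => Q) 0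
    have hgem : Measurable fun z : α × (Fin n → α) => g (e.symm z) :=
      hgm.comp e.symm.measurable
    have keyP : ∫⁻ x, g x ∂(Measure.pi fun _ : Fin (n+1) => P)
        = ∫⁻ a, ∫⁻ b, g (e.symm (a, b)) ∂(Measure.pi fun _ : Fin n => P) ∂P := by
      have h := hmpP.lintegral_comp hgem
      simp only [he, MeasurableEquiv.symm_apply_apply] at h
      rw [h, lintegral_prod _ hgem.aemeasurable]
    have keyQ : ∫⁻ x, g x ∂(Measure.pi fun _ : Fin (n+1) => Q)
        = ∫⁻ a, ∫⁻ b, g (e.symm (a, b)) ∂(Measure.pi fun _ : Fin n => Q) ∂Q := by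
      have h := hmpQ.lintegral_comp hgem
      simp only [he, MeasurableEquiv.symm_apply_apply] at h
      rw [h, lintegral_prod _ hgem.aemeasurable]
    set F : α → ℝ≥0∞ := fun a => ∫⁻ b, g (e.symm (a, b)) ∂(Measure.pi fun _ : Fin n => Q)
      with hF
    have hF1 : ∀ a, F a ≤ 1 := by
      intro a
      calc F a ≤ ∫⁻ _, 1 ∂(Measure.pi fun _ : Fin n => Q) := lintegral_mono fun b => hg _
        _ = 1 := by simp
    have step1 : ∫⁻ a, ∫⁻ b, g (e.symm (a, b)) ∂(Measure.pi fun _ : Fin n => P) ∂P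
        ≤ ∫⁻ a, F a ∂P + n * ENNReal.ofReal (tvDist P Q) := by
      calc ∫⁻ a, ∫⁻ b, g (e.symm (a, b)) ∂(Measure.pi fun _ : Fin n => P) ∂P
          ≤ ∫⁻ a, (F a + n * ENNReal.ofReal (tvDist P Q)) ∂P := by
            refine lintegral_mono fun a => ?_
            exact IH (fun b => g (e.symm (a, b)))
              (hgem.comp measurable_prodMk_left) (fun b => hg _)
        _ = ∫⁻ a, F a ∂P + n * ENNReal.ofReal (tvDist P Q) := by
            rw [lintegral_add_right _ measurable_const, lintegral_const, measure_univ, mul_one]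
    have step2 : ∫⁻ a, F a ∂P ≤ ∫⁻ a, F a ∂Q + ENNReal.ofReal (tvDist P Q) :=
      lintegral_le_add_tvDist P Q F hF1
    calc ∫⁻ x, g x ∂(Measure.pi fun _ : Fin (n+1) => P)
        ≤ (∫⁻ a, F a ∂Q + ENNReal.ofReal (tvDist P Q)) + n * ENNReal.ofReal (tvDist P Q) := by
          rw [keyP]; exact le_trans step1 (by gcongr)
      _ = ∫⁻ x, g x ∂(Measure.pi fun _ : Fin (n+1) => Q)
            + (n + 1 : ℕ) * ENNReal.ofReal (tvDist P Q) := by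
          rw [keyQ]; push_cast; ring

/-- Impossibility result: if the functional `V` is discontinuous at `P₀ ∈ 𝒫` in
total variation (with discontinuity gap at least `ε`), then for every sample size
`n` and every (measurable) estimator `V̂ₙ` built from an i.i.d. sample of size
`n`, the worst-case risk `sup_{P ∈ 𝒫} E_P[ρ(V(P), V̂ₙ(X))]` is at least `ε/4`. -/
theorem stmt7 {Ω W : Type*} [MeasurableSpace Ω] [MetricSpace W]
    [MeasurableSpace W] [BorelSpace W]
    (Pcal : Set (ProbabilityMeasure Ω)) (V : ProbabilityMeasure Ω → W)
    (P₀ : ProbabilityMeasure Ω) (hP₀ : P₀ ∈ Pcal) (ε : ℝ) (hε : 0 < ε)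
    (hdisc : ∀ δ > 0, ∃ P₁ ∈ Pcal,
      tvDist (P₀ : Measure Ω) (P₁ : Measure Ω) < δ ∧ ε < dist (V P₀) (V P₁))
    (n : ℕ) (Vhat : (Fin n → Ω) → W) (hVhat : Measurable Vhat) :
    ENNReal.ofReal (ε / 4) ≤
      ⨆ P ∈ Pcal, ∫⁻ x, ENNReal.ofReal (dist (V P) (Vhat x))
        ∂(Measure.pi fun _ : Fin n => (P : Measure Ω)) := by
  set risk : ProbabilityMeasure Ω → ℝ≥0∞ := fun P =>
    ∫⁻ x, ENNReal.ofReal (dist (V P) (Vhat x))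
      ∂(Measure.pi fun _ : Fin n => (P : Measure Ω)) with hrisk
  set S : ℝ≥0∞ := ⨆ P ∈ Pcal, risk P with hSdef
  show ENNReal.ofReal (ε / 4) ≤ S
  refine ENNReal.le_of_forall_pos_le_add fun η hη _ => ?_
  have hηR : (0 : ℝ) < (η : ℝ) := hη
  set δ : ℝ := 4 * (η : ℝ) / (ε * (n + 1)) with hδdef
  have hδpos : 0 < δ := by positivity
  obtain ⟨P₁, hP₁mem, htv, hdist⟩ := hdisc δ hδpos
  set μ₀ : Measure (Fin n → Ω) := Measure.pi fun _ : Fin n => (P₀ : Measure Ω) with hμ₀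
  set μ₁ : Measure (Fin n → Ω) := Measure.pi fun _ : Fin n => (P₁ : Measure Ω) with hμ₁
  set A : Set (Fin n → Ω) := Vhat ⁻¹' ((fun w => dist (V P₀) w) ⁻¹' Set.Ici (ε / 2)) with hAdef
  have hdistm : Measurable fun w : W => dist (V P₀) w := (continuous_const.dist continuous_id).measurable
  have hA : MeasurableSet A := hVhat (hdistm measurableSet_Ici)
  -- lower bounds for the two risks
  have hR₀ : ENNReal.ofReal (ε / 2) * μ₀ A ≤ risk P₀ := by
    calc ENNReal.ofReal (ε / 2) * μ₀ A
        = ∫⁻ _ in A, ENNReal.ofReal (ε / 2) ∂μ₀ := (setLIntegral_const _ _).symm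
      _ ≤ ∫⁻ x in A, ENNReal.ofReal (dist (V P₀) (Vhat x)) ∂μ₀ := by
          refine setLIntegral_mono' hA fun x hx => ?_
          exact ENNReal.ofReal_le_ofReal hx
      _ ≤ risk P₀ := setLIntegral_le_lintegral _ _
  have hR₁ : ENNReal.ofReal (ε / 2) * μ₁ Aᶜ ≤ risk P₁ := by
    calc ENNReal.ofReal (ε / 2) * μ₁ Aᶜ
        = ∫⁻ _ in Aᶜ, ENNReal.ofReal (ε / 2) ∂μ₁ := (setLIntegral_const _ _).symm
      _ ≤ ∫⁻ x in Aᶜ, ENNReal.ofReal (dist (V P₁) (Vhat x)) ∂μ₁ := by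
          refine setLIntegral_mono' hA.compl fun x hx => ?_
          apply ENNReal.ofReal_le_ofReal
          have hx' : dist (V P₀) (Vhat x) < ε / 2 := by
            simpa [hAdef] using hx
          have htri : dist (V P₀) (V P₁) ≤ dist (V P₀) (Vhat x) + dist (Vhat x) (V P₁) :=
            dist_triangle _ _ _
          have := dist_comm (Vhat x) (V P₁)
          linarith [hdist]
      _ ≤ risk P₁ := setLIntegral_le_lintegral _ _
  -- change of measure via the product TV bound
  have hmeasbd : μ₁ A ≤ μ₀ A + n * ENNReal.ofReal δ := by
    have hg : ∀ x, (A.indicator (1 : (Fin n → Ω) → ℝ≥0∞)) x ≤ 1 := by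
      intro x
      by_cases hx : x ∈ A <;> simp [Set.indicator_apply, hx]
    have := lintegral_pi_le_add_tvDist (P₁ : Measure Ω) (P₀ : Measure Ω) n
      (A.indicator (1 : (Fin n → Ω) → ℝ≥0∞)) (measurable_one.indicator hA) hg
    rw [lintegral_indicator_one hA, lintegral_indicator_one hA] at this
    refine le_trans this ?_
    gcongr
    rw [tvDist_comm]
    exact htv.le
  have hsum : (1 : ℝ≥0∞) ≤ μ₀ A + μ₁ Aᶜ + n * ENNReal.ofReal δ := by
    have h1 : (1 : ℝ≥0∞) = μ₁ A + μ₁ Aᶜ := by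
      rw [measure_add_measure_compl hA, measure_univ]
    calc (1 : ℝ≥0∞) = μ₁ A + μ₁ Aᶜ := h1
      _ ≤ (μ₀ A + n * ENNReal.ofReal δ) + μ₁ Aᶜ := by gcongr
      _ = μ₀ A + μ₁ Aᶜ + n * ENNReal.ofReal δ := by ring
  have hS0 : risk P₀ ≤ S := le_biSup risk hP₀
  have hS1 : risk P₁ ≤ S := le_biSup risk hP₁mem
  -- small remainder term
  have hrem : ENNReal.ofReal (ε / 2) * (n * ENNReal.ofReal δ) ≤ 2 * (η : ℝ≥0∞) := by
    have hδnn : (0 : ℝ) ≤ δ := hδpos.le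
    have e1 : ENNReal.ofReal (ε / 2) * (n * ENNReal.ofReal δ)
        = (n : ℝ≥0∞) * ENNReal.ofReal (ε / 2 * δ) := by
      rw [ENNReal.ofReal_mul (by positivity)]; ring
    rw [e1, ← ENNReal.ofReal_natCast n, ← ENNReal.ofReal_mul (by positivity)]
    have e2 : ENNReal.ofReal (2 * (η : ℝ)) = 2 * (η : ℝ≥0∞) := by
      rw [ENNReal.ofReal_mul (by norm_num)]
      simp [ENNReal.ofReal_coe_nnreal]
    rw [← e2]
    apply ENNReal.ofReal_le_ofReal
    have key : (n : ℝ) * (ε / 2 * δ) = 2 * (η : ℝ) * ((n : ℝ) / ((n : ℝ) + 1)) := by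
      rw [hδdef]; field_simp; ring
    have hfrac : (n : ℝ) / ((n : ℝ) + 1) ≤ 1 := by
      rw [div_le_one (by positivity)]; linarith
    calc (n : ℝ) * (ε / 2 * δ) = 2 * (η : ℝ) * ((n : ℝ) / ((n : ℝ) + 1)) := key
      _ ≤ 2 * (η : ℝ) * 1 := by gcongr
      _ = 2 * (η : ℝ) := mul_one _
  -- put everything together
  have main : ENNReal.ofReal (ε / 2) ≤ 2 * (S + (η : ℝ≥0∞)) := by
    calc ENNReal.ofReal (ε / 2) = ENNReal.ofReal (ε / 2) * 1 := (mul_one _).symm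
      _ ≤ ENNReal.ofReal (ε / 2) * (μ₀ A + μ₁ Aᶜ + n * ENNReal.ofReal δ) := by gcongr
      _ = ENNReal.ofReal (ε / 2) * μ₀ A + ENNReal.ofReal (ε / 2) * μ₁ Aᶜ
          + ENNReal.ofReal (ε / 2) * (n * ENNReal.ofReal δ) := by ring
      _ ≤ S + S + 2 * (η : ℝ≥0∞) := by
          gcongr
          · exact le_trans hR₀ hS0
          · exact le_trans hR₁ hS1
      _ = 2 * (S + (η : ℝ≥0∞)) := by ring
  have hhalf : ENNReal.ofReal (ε / 2) = 2 * ENNReal.ofReal (ε / 4) := by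
    rw [← ENNReal.ofReal_ofNat, ← ENNReal.ofReal_mul (by norm_num)]
    congr 1
    ring
  rw [hhalf] at main
  exact (ENNReal.mul_le_mul_iff_right (by norm_num) (by norm_num)).1 main
end

section
/- Let Θ = {x ∈ R^d : Mx ≥ c} be a nonempty bounded polytope, and let κ(Θ) > 0 be its polytope condition number. Then for every x ∈ R^d, the ℓ¹ constraint violation satisfies ι'(c − Mx)⁺ ≥ d(x, Θ) · κ(Θ), where d(x, Θ) is the Euclidean distance from x to Θ and ι is the all-ones vector. -/
open scoped RealInnerProductSpace

/-- Rank of the set of rows of `M` indexed by `B`. -/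
noncomputable def rankRows {d q : ℕ} (M : Matrix (Fin q) (Fin d) ℝ)
    (B : Finset (Fin q)) : ℕ :=
  Module.finrank ℝ (Submodule.span ℝ ((fun j : Fin q => M j) '' ↑B))

/-- Smallest singular value characterization of the submatrix `M_B`:
`min_{‖r‖ = 1} ‖M_B' r‖`. -/
noncomputable def sminRow {d q : ℕ} (M : Matrix (Fin q) (Fin d) ℝ)
    (B : Finset (Fin q)) : ℝ :=
  sInf {s : ℝ | ∃ r : Fin q → ℝ, (∀ j ∉ B, r j = 0) ∧
    (∑ j ∈ B, r j ^ 2) = 1 ∧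
    s = Real.sqrt (∑ i, (∑ j ∈ B, r j * M j i) ^ 2)}

/-- The polytope condition number of `Θ = {x : Mx ≥ c}`: the infimum over all
(binding sets `A` describing nonempty proper faces and) subsets `B ⊆ A` with
`rk(M_B) = rk(M_A) ≥ 1` of the smallest singular value `σ_{rk}(M_B)`. -/
noncomputable def polyCond {d q : ℕ} (M : Matrix (Fin q) (Fin d) ℝ)
    (c : Fin q → ℝ) : ℝ :=
  sInf {t : ℝ | ∃ A B : Finset (Fin q), B ⊆ A ∧
    (∃ x : Fin d → ℝ, (∀ j, c j ≤ M.mulVec x j) ∧ ∀ j ∈ A, M.mulVec x j = c j) ∧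
    1 ≤ rankRows M A ∧ rankRows M B = rankRows M A ∧ t = sminRow M B}

section aux

variable {E : Type*} [NormedAddCommGroup E] [InnerProductSpace ℝ E] [FiniteDimensional ℝ E]

omit [FiniteDimensional ℝ E] in
/-- Conic Carathéodory. -/
theorem my_caratheodory {ι : Type*} [DecidableEq ι] (a : ι → E) :
    ∀ (t : Finset ι) (μ : ι → ℝ), (∀ j, 0 ≤ μ j) →
    ∃ t' : Finset ι, t' ⊆ t ∧ LinearIndependent ℝ (fun i : t' => a i) ∧
      ∃ ν : ι → ℝ, (∀ j, 0 ≤ ν j) ∧ ∑ j ∈ t, μ j • a j = ∑ j ∈ t', ν j • a j := by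
  intro t
  induction t using Finset.strongInductionOn with
  | _ t ih =>
    intro μ hμ
    by_cases hind : LinearIndependent ℝ (fun i : t => a i)
    · exact ⟨t, subset_rfl, hind, μ, hμ, rfl⟩
    · obtain ⟨g, hg0, i₀, hi₀⟩ := Fintype.not_linearIndependent_iff.mp hind
      have key : ∀ g : ↥t → ℝ, (∑ i, g i • a i = 0) → (∃ i, 0 < g i) →
          ∃ t' : Finset ι, t' ⊆ t ∧ LinearIndependent ℝ (fun i : t' => a i) ∧
          ∃ ν : ι → ℝ, (∀ j, 0 ≤ ν j) ∧ ∑ j ∈ t, μ j • a j = ∑ j ∈ t', ν j • a j := by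
        intro g hg ⟨ip, hip⟩
        classical
        set cc : ι → ℝ := fun j => if h : j ∈ t then g ⟨j, h⟩ else 0 with hcc
        have hsum0 : ∑ j ∈ t, cc j • a j = 0 := by
          rw [← hg, ← Finset.sum_attach t (fun j => cc j • a j)]
          refine Finset.sum_congr rfl fun i _ => ?_
          simp [hcc, i.2]
        have hP : (t.filter (fun j => 0 < cc j)).Nonempty := by
          refine ⟨(ip : ι), Finset.mem_filter.mpr ⟨ip.2, ?_⟩⟩
          simpa [hcc, ip.2] using hip
        obtain ⟨j₀, hj₀P, hj₀min⟩ := Finset.exists_min_image _ (fun j => μ j / cc j) hP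
        have hj₀t : j₀ ∈ t := (Finset.mem_filter.mp hj₀P).1
        have hcj₀ : 0 < cc j₀ := (Finset.mem_filter.mp hj₀P).2
        set τ : ℝ := μ j₀ / cc j₀ with hτ
        have hτ0 : 0 ≤ τ := div_nonneg (hμ j₀) hcj₀.le
        set ν : ι → ℝ := fun j => if j ∈ t then μ j - τ * cc j else 0 with hν
        have hν0 : ∀ j, 0 ≤ ν j := by
          intro j
          simp only [hν]
          split_ifs with hjt
          · rcases le_or_gt (cc j) 0 with hc | hc
            · have : 0 ≤ -(τ * cc j) := by nlinarith
              linarith [hμ j]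
            · have h1 := hj₀min j (Finset.mem_filter.mpr ⟨hjt, hc⟩)
              have h2 : μ j₀ / cc j₀ * cc j ≤ μ j := by
                rw [div_mul_eq_mul_div, div_le_iff₀ hcj₀]
                nlinarith [(div_le_div_iff₀ hcj₀ hc).mp h1]
              linarith
          · exact le_rfl
        have hνj₀ : ν j₀ = 0 := by
          simp only [hν, if_pos hj₀t, hτ]
          field_simp
          ring
        have hsum : ∑ j ∈ t, μ j • a j = ∑ j ∈ t, ν j • a j := by
          have : ∑ j ∈ t, ν j • a j = ∑ j ∈ t, (μ j • a j - τ • (cc j • a j)) := by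
            refine Finset.sum_congr rfl fun j hj => ?_
            simp [hν, if_pos hj, sub_smul, smul_smul]
          rw [this, Finset.sum_sub_distrib, ← Finset.smul_sum, hsum0, smul_zero, sub_zero]
        have hsum2 : ∑ j ∈ t, ν j • a j = ∑ j ∈ t.erase j₀, ν j • a j := by
          rw [← Finset.add_sum_erase _ _ hj₀t, hνj₀, zero_smul, zero_add]
        obtain ⟨t', ht'sub, ht'ind, ν', hν'0, hν'⟩ :=
          ih (t.erase j₀) (Finset.erase_ssubset hj₀t) ν hν0
        exact ⟨t', ht'sub.trans (Finset.erase_subset _ _), ht'ind, ν', hν'0, by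
          rw [hsum, hsum2, hν']⟩
      rcases hi₀.lt_or_gt with h | h
      · exact key (-g) (by simpa using hg0) ⟨i₀, by simpa using h⟩
      · exact key g hg0 ⟨i₀, h⟩

/-- A finitely generated cone is closed. -/
theorem my_cone_isClosed {ι : Type*} [Fintype ι] (a : ι → E) (s : Finset ι) :
    IsClosed {v : E | ∃ μ : ι → ℝ, (∀ j, 0 ≤ μ j) ∧ v = ∑ j ∈ s, μ j • a j} := by
  classical
  have hmain : {v : E | ∃ μ : ι → ℝ, (∀ j, 0 ≤ μ j) ∧ v = ∑ j ∈ s, μ j • a j}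
      = ⋃ t ∈ {t : Finset ι | t ⊆ s ∧ LinearIndependent ℝ (fun i : t => a i)},
        {v : E | ∃ μ : ι → ℝ, (∀ j, 0 ≤ μ j) ∧ v = ∑ j ∈ t, μ j • a j} := by
    ext v
    simp only [Set.mem_setOf_eq, Set.mem_iUnion]
    constructor
    · rintro ⟨μ, hμ, rfl⟩
      obtain ⟨t', ht's, ht'ind, ν, hν, hsum⟩ := my_caratheodory a s μ hμ
      exact ⟨t', ⟨ht's, ht'ind⟩, ν, hν, hsum⟩
    · rintro ⟨t, ⟨hts, -⟩, μ, hμ, rfl⟩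
      refine ⟨fun j => if j ∈ t then μ j else 0,
        fun j => by dsimp only; split_ifs with h; exacts [hμ j, le_rfl], ?_⟩
      rw [← Finset.sum_subset hts (fun j _ hjt => by simp [hjt])]
      exact (Finset.sum_congr rfl fun j hj => by simp [hj]).symm
  rw [hmain]
  refine Set.Finite.isClosed_biUnion (Set.toFinite _) ?_
  rintro t ⟨-, hind⟩
  let f : (↥t → ℝ) →ₗ[ℝ] E :=
    { toFun := fun μ => ∑ i, μ i • a (i : ι)
      map_add' := fun μ ν => by simp [add_smul, Finset.sum_add_distrib]
      map_smul' := fun r μ => by simp [smul_smul, Finset.smul_sum] }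
  have hinj : Function.Injective f := by
    rw [← LinearMap.ker_eq_bot, LinearMap.ker_eq_bot']
    intro μ hμ
    funext i
    exact Fintype.linearIndependent_iff.mp hind μ hμ i
  have himg : {v : E | ∃ μ : ι → ℝ, (∀ j, 0 ≤ μ j) ∧ v = ∑ j ∈ t, μ j • a j}
      = f '' {μ : ↥t → ℝ | ∀ i, 0 ≤ μ i} := by
    ext v
    simp only [Set.mem_setOf_eq, Set.mem_image]
    constructor
    · rintro ⟨μ, hμ, rfl⟩
      refine ⟨fun i => μ i, fun i => hμ i, ?_⟩
      show ∑ i : ↥t, μ i • a (i : ι) = _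
      rw [Finset.sum_coe_sort t (fun j => μ j • a j)]
    · rintro ⟨μ0, hμ0, rfl⟩
      refine ⟨fun j => if h : j ∈ t then μ0 ⟨j, h⟩ else 0,
        fun j => by dsimp only; split_ifs with h; exacts [hμ0 _, le_rfl], Eq.symm ?_⟩
      show (∑ j ∈ t, (if h : j ∈ t then μ0 ⟨j, h⟩ else 0) • a j) = ∑ i : ↥t, μ0 i • a (i : ι)
      rw [← Finset.sum_coe_sort t (fun j => (if h : j ∈ t then μ0 ⟨j, h⟩ else 0) • a j)]
      exact Finset.sum_congr rfl fun i _ => by simp [i.2]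
  rw [himg]
  have hcl : IsClosed {μ : ↥t → ℝ | ∀ i, 0 ≤ μ i} := by
    have : {μ : ↥t → ℝ | ∀ i, 0 ≤ μ i} = ⋂ i, {μ | 0 ≤ μ i} := by
      ext; simp [Set.mem_iInter]
    rw [this]
    exact isClosed_iInter fun i => isClosed_le continuous_const (continuous_apply i)
  exact (f.isClosedEmbedding_of_injective (LinearMap.ker_eq_bot.mpr hinj)).isClosedMap _ hcl

/-- Farkas' lemma (cone version). -/
theorem my_farkas {ι : Type*} [Fintype ι] (a : ι → E) (s : Finset ι) (v : E)
    [CompleteSpace E]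
    (h : ∀ w : E, (∀ j ∈ s, 0 ≤ ⟪a j, w⟫) → ⟪v, w⟫ ≤ 0) :
    ∃ μ : ι → ℝ, (∀ j, 0 ≤ μ j) ∧ v = -∑ j ∈ s, μ j • a j := by
  classical
  set C : Set E := {u : E | ∃ μ : ι → ℝ, (∀ j, 0 ≤ μ j) ∧ u = ∑ j ∈ s, μ j • a j} with hC
  by_contra hcon
  have hnmem : -v ∉ C := by
    rintro ⟨μ, hμ, hv⟩
    exact hcon ⟨μ, hμ, by rw [← hv, neg_neg]⟩
  let K : ConvexCone ℝ E :=
    { carrier := C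
      smul_mem' := by
        rintro r hr u ⟨μ, hμ, rfl⟩
        exact ⟨fun j => r * μ j, fun j => mul_nonneg hr.le (hμ j), by
          rw [Finset.smul_sum]; exact Finset.sum_congr rfl fun j _ => (mul_smul r (μ j) (a j)).symm⟩
      add_mem' := by
        rintro u ⟨μ, hμ, rfl⟩ w ⟨ν, hν, rfl⟩
        exact ⟨fun j => μ j + ν j, fun j => add_nonneg (hμ j) (hν j), by
          rw [← Finset.sum_add_distrib]
          exact Finset.sum_congr rfl fun j _ => (add_smul (μ j) (ν j) (a j)).symm⟩ }
  have hKne : (K : Set E).Nonempty := ⟨0, ⟨fun _ => 0, fun _ => le_rfl, by simp⟩⟩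
  have hKcl : IsClosed (K : Set E) := my_cone_isClosed a s
  let P : ProperCone ℝ E :=
    { carrier := C
      zero_mem' := ⟨fun _ => 0, fun _ => le_rfl, by simp⟩
      add_mem' := fun hu hw => K.add_mem' hu hw
      smul_mem' := by
        rintro ⟨r, hr⟩ u ⟨μ, hμ, rfl⟩
        exact ⟨fun j => r * μ j, fun j => mul_nonneg hr (hμ j), by
          rw [Finset.smul_sum]; exact Finset.sum_congr rfl fun j _ => (mul_smul r (μ j) (a j)).symm⟩
      isClosed' := hKcl }
  obtain ⟨y, hy1, hy2⟩ :=
    P.hyperplane_separation' (show -v ∉ P from hnmem)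
  rw [real_inner_comm] at hy2
  have hyw : ∀ j ∈ s, 0 ≤ ⟪a j, y⟫ := by
    intro j hj
    refine hy1 (a j) ⟨fun k => if k = j then 1 else 0,
      fun k => by dsimp only; split_ifs <;> norm_num, ?_⟩
    have hsm : ∀ k, (if k = j then (1:ℝ) else 0) • a k = if k = j then a k else 0 :=
      fun k => by split_ifs <;> simp
    rw [Finset.sum_congr rfl fun k _ => hsm k, Finset.sum_ite_eq' s j a, if_pos hj]
  have h1 := h y hyw
  have h2 : ⟪y, -v⟫ = -⟪v, y⟫ := by rw [inner_neg_right, real_inner_comm]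
  rw [h2] at hy2
  linarith

end aux

/-- The rows of `M` as vectors of Euclidean space. -/
noncomputable def aRow {d q : ℕ} (M : Matrix (Fin q) (Fin d) ℝ) :
    Fin q → EuclideanSpace ℝ (Fin d) := fun j => WithLp.toLp 2 (M j)

/-- ℓ¹ deviation minorization: for a nonempty bounded polytope
`Θ = {x : Mx ≥ c}` with condition number `κ(Θ) > 0`, for every `x ∈ ℝ^d`,
`ι'(c − Mx)⁺ ≥ d(x, Θ) · κ(Θ)`. -/
theorem stmt9 (d q : ℕ) (M : Matrix (Fin q) (Fin d) ℝ) (c : Fin q → ℝ)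
    (Θ : Set (Fin d → ℝ)) (hΘ : Θ = {x : Fin d → ℝ | ∀ j, c j ≤ M.mulVec x j})
    (hne : Θ.Nonempty)
    (hbd : ∃ R : ℝ, ∀ x ∈ Θ, Real.sqrt (∑ i, x i ^ 2) ≤ R)
    (hκpos : 0 < polyCond M c) :
    ∀ x : Fin d → ℝ,
      (sInf {r : ℝ | ∃ y ∈ Θ, r = Real.sqrt (∑ i, (x i - y i) ^ 2)}) *
          polyCond M c ≤
        ∑ j, max (c j - M.mulVec x j) 0 := by
  classical
  intro x
  have hS0 : 0 ≤ ∑ j, max (c j - M.mulVec x j) 0 :=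
    Finset.sum_nonneg fun j _ => le_max_right _ _
  set dset : Set ℝ := {r : ℝ | ∃ y ∈ Θ, r = Real.sqrt (∑ i, (x i - y i) ^ 2)} with hdset
  have hdbdd : BddBelow dset := ⟨0, by rintro r ⟨y, -, rfl⟩; exact Real.sqrt_nonneg _⟩
  by_cases hx : x ∈ Θ
  · have h0 : (0:ℝ) ∈ dset := ⟨x, hx, by simp⟩
    have h1 : sInf dset ≤ 0 := csInf_le hdbdd h0
    have h2 : 0 ≤ sInf dset :=
      le_csInf ⟨0, h0⟩ (by rintro r ⟨y, -, rfl⟩; exact Real.sqrt_nonneg _)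
    rw [le_antisymm h1 h2, zero_mul]
    exact hS0
  -- main case : x ∉ Θ
  · let xE : EuclideanSpace ℝ (Fin d) := WithLp.toLp 2 x
    set Θ' : Set (EuclideanSpace ℝ (Fin d)) :=
      {z : EuclideanSpace ℝ (Fin d) | ∀ j, c j ≤ M.mulVec z j} with hΘ'
    -- basic facts
    have hinner : ∀ (j : Fin q) (w : EuclideanSpace ℝ (Fin d)),
        ⟪aRow M j, w⟫ = M.mulVec w j := by
      intro j w
      simp [aRow, PiLp.inner_apply, RCLike.inner_apply, Matrix.mulVec, dotProduct, mul_comm]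
    have hnorm : ∀ z : EuclideanSpace ℝ (Fin d), ‖z‖ = Real.sqrt (∑ i, z i ^ 2) := by
      intro z
      rw [EuclideanSpace.norm_eq]
      congr 1
      exact Finset.sum_congr rfl fun i _ => by rw [Real.norm_eq_abs, sq_abs]
    have hmv : ∀ (z w : EuclideanSpace ℝ (Fin d)) (t : ℝ) (j : Fin q),
        M.mulVec (z + t • w) j = M.mulVec z j + t * M.mulVec w j := by
      intro z w t j
      simp only [Matrix.mulVec, dotProduct, WithLp.ofLp_add, WithLp.ofLp_smul, Pi.add_apply, Pi.smul_apply, PiLp.add_apply, PiLp.smul_apply,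
        smul_eq_mul, Finset.mul_sum]
      rw [← Finset.sum_add_distrib]
      exact Finset.sum_congr rfl fun i _ => by ring
    -- Θ' is nonempty, closed, convex
    have hne' : Θ'.Nonempty := by
      obtain ⟨z0, hz0⟩ := hne
      rw [hΘ] at hz0
      exact ⟨WithLp.toLp 2 z0, hz0⟩
    have hcl : IsClosed Θ' := by
      have : Θ' = ⋂ j, {z : EuclideanSpace ℝ (Fin d) | c j ≤ ⟪aRow M j, z⟫} := by
        ext z
        simp only [hΘ', Set.mem_setOf_eq, Set.mem_iInter]
        exact forall_congr' fun j => by rw [hinner]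
      rw [this]
      exact isClosed_iInter fun j =>
        isClosed_le continuous_const (continuous_const.inner continuous_id)
    have hconv : Convex ℝ Θ' := by
      intro z1 h1 z2 h2 ta tb hta htb hab
      intro j
      have e1 := h1 j
      have e2 := h2 j
      have heq : M.mulVec (ta • z1 + tb • z2) j = ta * M.mulVec z1 j + tb * M.mulVec z2 j := by
        simp only [Matrix.mulVec, dotProduct, WithLp.ofLp_add, WithLp.ofLp_smul, Pi.add_apply, Pi.smul_apply, PiLp.add_apply, PiLp.smul_apply,
          smul_eq_mul, Finset.mul_sum]
        rw [← Finset.sum_add_distrib]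
        exact Finset.sum_congr rfl fun i _ => by ring
      rw [WithLp.ofLp_add, WithLp.ofLp_smul, WithLp.ofLp_smul, heq]
      have e3 : ta * c j + tb * c j = c j := by rw [← add_mul, hab, one_mul]
      linarith [mul_le_mul_of_nonneg_left e1 hta, mul_le_mul_of_nonneg_left e2 htb]
    -- projection of x onto Θ'
    obtain ⟨y, hyΘ', hproj⟩ := exists_norm_eq_iInf_of_complete_convex hne'
      hcl.isComplete hconv xE
    have hvar : ∀ w ∈ Θ', ⟪xE - y, w - y⟫ ≤ 0 :=
      (norm_eq_iInf_iff_real_inner_le_zero hconv hyΘ').mp hproj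
    have hyfeas : ∀ j, c j ≤ M.mulVec y j := hyΘ'
    -- active set
    set A : Finset (Fin q) := Finset.univ.filter (fun j => M.mulVec y j = c j) with hA
    have hAeq : ∀ j ∈ A, M.mulVec y j = c j := fun j hj => (Finset.mem_filter.mp hj).2
    -- Farkas hypothesis
    have hfark : ∀ w : EuclideanSpace ℝ (Fin d),
        (∀ j ∈ A, 0 ≤ ⟪aRow M j, w⟫) → ⟪xE - y, w⟫ ≤ 0 := by
      intro w hw
      set B : Finset (Fin q) := Finset.univ.filter (fun j => j ∉ A) with hB
      set ε : ℝ := if hBne : B.Nonempty then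
        min 1 (B.inf' hBne fun j => (M.mulVec y j - c j) / (|M.mulVec w j| + 1)) else 1 with hε
      have hslack : ∀ j ∈ B, 0 < M.mulVec y j - c j := by
        intro j hj
        have hjA : j ∉ A := (Finset.mem_filter.mp hj).2
        have : M.mulVec y j ≠ c j := fun h => hjA (Finset.mem_filter.mpr ⟨Finset.mem_univ _, h⟩)
        have := hyfeas j
        cases lt_or_eq_of_le this with
        | inl h => linarith
        | inr h => exact absurd h.symm ‹M.mulVec y j ≠ c j›
      have hε0 : 0 < ε := by
        rw [hε]
        split_ifs with hBne
        · refine lt_min one_pos ?_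
          rw [Finset.lt_inf'_iff]
          intro j hj
          exact div_pos (hslack j hj) (by positivity)
        · exact one_pos
      have hεle : ∀ j ∈ B, ε * (|M.mulVec w j| + 1) ≤ M.mulVec y j - c j := by
        intro j hj
        have hBne : B.Nonempty := ⟨j, hj⟩
        have h1 : ε ≤ (M.mulVec y j - c j) / (|M.mulVec w j| + 1) := by
          rw [hε, dif_pos hBne]
          exact (min_le_right _ _).trans (Finset.inf'_le _ hj)
        rw [← le_div_iff₀ (by positivity : (0:ℝ) < |M.mulVec w j| + 1)]
        exact h1
      have hmem : y + ε • w ∈ Θ' := by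
        intro j
        rw [WithLp.ofLp_add, WithLp.ofLp_smul, hmv]
        by_cases hjA : j ∈ A
        · have := hw j hjA
          rw [hinner] at this
          have := mul_nonneg hε0.le this
          have heq := hAeq j hjA
          linarith
        · have hjB : j ∈ B := Finset.mem_filter.mpr ⟨Finset.mem_univ _, hjA⟩
          have h1 := hεle j hjB
          have h2 : -(ε * |M.mulVec w j|) ≤ ε * M.mulVec w j := by
            nlinarith [neg_abs_le (M.mulVec w j), hε0.le]
          nlinarith
      have := hvar (y + ε • w) hmem
      rw [add_sub_cancel_left, real_inner_smul_right] at this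
      nlinarith
    obtain ⟨μ, hμ0, hxy⟩ := my_farkas (aRow M) A (xE - y) hfark
    -- basic quantities
    set D : ℝ := ‖xE - y‖ with hD
    have hyΘ : (y : Fin d → ℝ) ∈ Θ := by rw [hΘ]; exact hyΘ'
    have hxney : xE - y ≠ 0 := by
      intro h
      rw [sub_eq_zero] at h
      have h2 : x = y := congrArg WithLp.ofLp h
      exact hx (by rw [h2]; exact hyΘ)
    have hDpos : 0 < D := by
      rw [hD, norm_pos_iff]
      exact hxney
    -- coordinates of the combination
    have hu : ∀ i : Fin d, (∑ j ∈ A, μ j • aRow M j) i = ∑ j ∈ A, μ j * M j i := by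
      intro i
      show EuclideanSpace.projₗ (𝕜 := ℝ) i (∑ j ∈ A, μ j • aRow M j) = _
      rw [map_sum]
      exact Finset.sum_congr rfl fun j _ => by simp [aRow]
    have hyx : ∀ i, y i - x i = ∑ j ∈ A, μ j * M j i := by
      intro i
      have h1 := congrArg (fun z : EuclideanSpace ℝ (Fin d) => z i) hxy
      have h2 : (xE - y) i = x i - y i := rfl
      have h3 : (-(∑ j ∈ A, μ j • aRow M j) : EuclideanSpace ℝ (Fin d)) i
          = -((∑ j ∈ A, μ j • aRow M j) i) := rfl
      simp only at h1
      rw [h2, h3, hu i] at h1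
      linarith
    -- key identity
    have hDsq : D ^ 2 = ∑ j ∈ A, μ j * (c j - M.mulVec x j) := by
      have h1 : D ^ 2 = ⟪xE - y,
          xE - y⟫ := (real_inner_self_eq_norm_sq _).symm
      have h2 : ⟪xE - y, xE - y⟫
          = ⟪xE - y, -∑ j ∈ A, μ j • aRow M j⟫ := by rw [← hxy]
      have h3 : ⟪xE - y, -∑ j ∈ A, μ j • aRow M j⟫
          = -∑ j ∈ A, μ j * ⟪xE - y, aRow M j⟫ := by
        rw [inner_neg_right, inner_sum]
        congr 1
        exact Finset.sum_congr rfl fun j _ => real_inner_smul_right _ _ _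
      have h4 : ∀ j ∈ A, μ j * ⟪xE - y, aRow M j⟫
          = -(μ j * (c j - M.mulVec x j)) := by
        intro j hj
        have e1 : ⟪xE - y, aRow M j⟫
            = ⟪aRow M j, xE⟫ - ⟪aRow M j, y⟫ := by
          rw [real_inner_comm, inner_sub_right]
        rw [e1, hinner, hinner, hAeq j hj]
        ring
      rw [h1, h2, h3, Finset.sum_congr rfl h4, Finset.sum_neg_distrib, neg_neg]
    -- N
    set N : ℝ := Real.sqrt (∑ j ∈ A, μ j ^ 2) with hN
    have hN0 : 0 ≤ N := Real.sqrt_nonneg _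
    have hμleN : ∀ j ∈ A, μ j ≤ N := by
      intro j hj
      have h1 : μ j ^ 2 ≤ ∑ k ∈ A, μ k ^ 2 :=
        Finset.single_le_sum (fun k _ => sq_nonneg (μ k)) hj
      calc μ j = Real.sqrt (μ j ^ 2) := (Real.sqrt_sq (hμ0 j)).symm
        _ ≤ N := Real.sqrt_le_sqrt h1
    have hD2NS : D ^ 2 ≤ N * ∑ j, max (c j - M.mulVec x j) 0 := by
      rw [hDsq]
      calc ∑ j ∈ A, μ j * (c j - M.mulVec x j)
          ≤ ∑ j ∈ A, N * max (c j - M.mulVec x j) 0 := by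
            refine Finset.sum_le_sum fun j hj => ?_
            calc μ j * (c j - M.mulVec x j) ≤ μ j * max (c j - M.mulVec x j) 0 :=
              mul_le_mul_of_nonneg_left (le_max_left _ _) (hμ0 j)
            _ ≤ N * max (c j - M.mulVec x j) 0 :=
              mul_le_mul_of_nonneg_right (hμleN j hj) (le_max_right _ _)
        _ = N * ∑ j ∈ A, max (c j - M.mulVec x j) 0 := (Finset.mul_sum _ _ _).symm
        _ ≤ N * ∑ j, max (c j - M.mulVec x j) 0 := by
            refine mul_le_mul_of_nonneg_left ?_ hN0
            exact Finset.sum_le_sum_of_subset_of_nonneg (Finset.subset_univ A)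
              (fun j _ _ => le_max_right _ _)
    have hNpos : 0 < N := by
      rcases hN0.lt_or_eq with h | h
      · exact h
      · exfalso
        have : D ^ 2 ≤ 0 := by rw [← h, zero_mul] at hD2NS; exact hD2NS
        nlinarith
    -- sminRow bound
    have hsmin : sminRow M A ≤ D / N := by
      apply csInf_le
      · exact ⟨0, by rintro r ⟨rr, -, -, rfl⟩; exact Real.sqrt_nonneg _⟩
      · refine ⟨fun j => if j ∈ A then μ j / N else 0, fun j hj => by simp [hj], ?_, ?_⟩
        · have h1 : ∀ j ∈ A, (if j ∈ A then μ j / N else 0) ^ 2 = μ j ^ 2 / N ^ 2 :=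
            fun j hj => by rw [if_pos hj, div_pow]
          rw [Finset.sum_congr rfl h1, ← Finset.sum_div]
          rw [show N ^ 2 = ∑ j ∈ A, μ j ^ 2 from Real.sq_sqrt
            (Finset.sum_nonneg fun j _ => sq_nonneg _)]
          exact div_self (Real.sqrt_pos.mp hNpos).ne'
        · have hco : ∀ i, (∑ j ∈ A, (if j ∈ A then μ j / N else 0) * M j i)
              = (y i - x i) / N := by
            intro i
            rw [Finset.sum_congr rfl (fun j hj => by rw [if_pos hj]), hyx i, Finset.sum_div]
            exact Finset.sum_congr rfl fun j _ => (div_mul_eq_mul_div _ _ _)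
          rw [Finset.sum_congr rfl fun i _ => by rw [hco i]]
          have h2 : ∀ i : Fin d, ((y i - x i) / N) ^ 2 = (y i - x i) ^ 2 / N ^ 2 :=
            fun i => div_pow _ _ _
          rw [Finset.sum_congr rfl fun i _ => h2 i, ← Finset.sum_div,
            Real.sqrt_div (Finset.sum_nonneg fun i _ => sq_nonneg _),
            Real.sqrt_sq hN0]
          congr 1
          rw [hD, hnorm]
          congr 1
          exact Finset.sum_congr rfl fun i _ => by
            rw [show (xE - y) i = x i - y i from rfl]
            ring
    -- polyCond bound
    have hrank1 : 1 ≤ rankRows M A := by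
      set u' : Fin d → ℝ := fun i => y i - x i with hu'
      have hune : u' ≠ 0 := by
        intro h
        apply hxney
        ext i
        have := congrFun h i
        simp only [hu', Pi.zero_apply] at this
        show x i - y i = 0
        linarith
      have humem : u' ∈ Submodule.span ℝ ((fun j : Fin q => M j) '' ↑A) := by
        have : u' = ∑ j ∈ A, μ j • (M j : Fin d → ℝ) := by
          funext i
          rw [hu']
          simp only [Finset.sum_apply, Pi.smul_apply, smul_eq_mul]
          exact hyx i
        rw [this]
        exact Submodule.sum_mem _ fun j hj => Submodule.smul_mem _ _
          (Submodule.subset_span ⟨j, Finset.mem_coe.mpr hj, rfl⟩)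
      have : Nontrivial ↥(Submodule.span ℝ ((fun j : Fin q => M j) '' ↑A)) :=
        nontrivial_of_ne ⟨u', humem⟩ 0 (by simp [hune])
      have hpos : 0 < Module.finrank ℝ ↥(Submodule.span ℝ ((fun j : Fin q => M j) '' ↑A)) :=
        Module.finrank_pos_iff.mpr this
      exact hpos
    have hpoly : polyCond M c ≤ sminRow M A := by
      apply csInf_le
      · refine ⟨0, ?_⟩
        rintro t ⟨A', B', -, -, -, -, rfl⟩
        exact Real.sInf_nonneg (by rintro r ⟨rr, -, -, rfl⟩; exact Real.sqrt_nonneg _)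
      · exact ⟨A, A, subset_rfl, ⟨y, hyfeas, hAeq⟩, hrank1, rfl, rfl⟩
    -- final chain
    have hDdset : D ∈ dset := by
      refine ⟨y, hyΘ, ?_⟩
      rw [hD, hnorm]
      congr 1
    have hdle : sInf dset ≤ D := csInf_le hdbdd hDdset
    have hκle : polyCond M c ≤ D / N := hpoly.trans hsmin
    calc sInf dset * polyCond M c ≤ D * polyCond M c :=
        mul_le_mul_of_nonneg_right hdle hκpos.le
      _ ≤ D * (D / N) := mul_le_mul_of_nonneg_left hκle hDpos.le
      _ = D ^ 2 / N := by ring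
      _ ≤ ∑ j, max (c j - M.mulVec x j) 0 := by
          rw [div_le_iff₀ hNpos]
          linarith [hD2NS]
end
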